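/- arXiv:2204.02586 — 3 statements merged into one kernel-verified Lean document; each statement's English description precedes it below -/
import Mathlib

section
/- Under Condition 1, the maximal hyperedges of the 0-characteristic hypergraph do not overlap: if x ∈ w₁ and x ∈ w₂ for maximal admissible hyperedges w₁, w₂, then w₁ = w₂. -/
/-- Under Condition 1, maximal admissible hyperedges (at ε = 0) do not
overlap: if `x ∈ w₁` and `x ∈ w₂` for maximal admissible hyperedges `w₁, w₂`, then
`w₁ = w₂`. -/
theorem stmt_2 {X Y Z : Type*} [Fintype X] [Fintype Y]
    (f : X × Y → Z) (p : X × Y → ℝ)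
    (hnn : ∀ a, 0 ≤ p a) (hsum : ∑ a, p a = 1)
    (admissible : Set X → Prop)
    (hadm : ∀ w, admissible w ↔ w.Nonempty ∧
      ∀ y : Y, ∀ x₁ ∈ w, ∀ x₂ ∈ w, 0 < p (x₁, y) → 0 < p (x₂, y) →
        f (x₁, y) = f (x₂, y))
    (hcond1 : ∀ y : Y, ∀ x₁ x₂ : X, f (x₁, y) ≠ f (x₂, y) →
      (p (x₁, y) = 0 ∧ p (x₂, y) = 0) ∨ (0 < p (x₁, y) ∧ 0 < p (x₂, y)))
    (w₁ w₂ : Set X)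
    (hmax₁ : admissible w₁ ∧ ∀ w', admissible w' → w₁ ⊆ w' → w₁ = w')
    (hmax₂ : admissible w₂ ∧ ∀ w', admissible w' → w₂ ⊆ w' → w₂ = w')
    (x : X) (hx₁ : x ∈ w₁) (hx₂ : x ∈ w₂) :
    w₁ = w₂ := by
  obtain ⟨ha₁, hm₁⟩ := hmax₁
  obtain ⟨ha₂, hm₂⟩ := hmax₂
  have h₁ := (hadm w₁).mp ha₁
  have h₂ := (hadm w₂).mp ha₂
  -- key: pulling to the common point
  have key : ∀ (w : Set X), w.Nonempty →
      (∀ y : Y, ∀ x₁ ∈ w, ∀ x₂ ∈ w, 0 < p (x₁, y) → 0 < p (x₂, y) →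
        f (x₁, y) = f (x₂, y)) →
      ∀ y : Y, ∀ z ∈ w, x ∈ w → 0 < p (z, y) → f (z, y) = f (x, y) := by
    intro w _ hw y z hz hxw hpz
    by_contra hne
    rcases hcond1 y z x hne with ⟨hz0, _⟩ | ⟨hp1, hp2⟩
    · exact absurd hz0 (ne_of_gt hpz)
    · exact hne (hw y z hz x hxw hp1 hp2)
  have hadmU : admissible (w₁ ∪ w₂) := by
    rw [hadm]
    refine ⟨⟨x, Or.inl hx₁⟩, ?_⟩
    intro y x₁ hx1 x₂ hx2 hp1 hp2
    have e1 : f (x₁, y) = f (x, y) := by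
      rcases hx1 with h | h
      · exact key w₁ h₁.1 h₁.2 y x₁ h hx₁ hp1
      · exact key w₂ h₂.1 h₂.2 y x₁ h hx₂ hp1
    have e2 : f (x₂, y) = f (x, y) := by
      rcases hx2 with h | h
      · exact key w₁ h₁.1 h₁.2 y x₂ h hx₁ hp2
      · exact key w₂ h₂.1 h₂.2 y x₂ h hx₂ hp2
    exact e1.trans e2.symm
  have e1 := hm₁ (w₁ ∪ w₂) hadmU Set.subset_union_left
  have e2 := hm₂ (w₁ ∪ w₂) hadmU Set.subset_union_right
  exact e1.trans e2.symm
end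

section
/- Under Condition 1, the union of any two admissible hyperedges (at ε = 0) that share a common element is itself an admissible hyperedge. -/
/-- Under Condition 1, the union of any two admissible hyperedges
(at ε = 0) that share a common element is itself an admissible hyperedge. -/
theorem stmt_3 {X Y Z : Type*} [Fintype X] [Fintype Y]
    (f : X × Y → Z) (p : X × Y → ℝ)
    (hnn : ∀ a, 0 ≤ p a) (hsum : ∑ a, p a = 1)
    (admissible : Set X → Prop)
    (hadm : ∀ w, admissible w ↔ w.Nonempty ∧
      ∀ y : Y, ∀ x₁ ∈ w, ∀ x₂ ∈ w, 0 < p (x₁, y) → 0 < p (x₂, y) →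
        f (x₁, y) = f (x₂, y))
    (hcond1 : ∀ y : Y, ∀ x₁ x₂ : X, f (x₁, y) ≠ f (x₂, y) →
      (p (x₁, y) = 0 ∧ p (x₂, y) = 0) ∨ (0 < p (x₁, y) ∧ 0 < p (x₂, y)))
    (w₁ w₂ : Set X) (h₁ : admissible w₁) (h₂ : admissible w₂)
    (x : X) (hx₁ : x ∈ w₁) (hx₂ : x ∈ w₂) :
    admissible (w₁ ∪ w₂) := by
  rw [hadm] at h₁ h₂ ⊢
  obtain ⟨-, H₁⟩ := h₁
  obtain ⟨-, H₂⟩ := h₂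
  refine ⟨⟨x, Or.inl hx₁⟩, ?_⟩
  intro y x₁ hx1 x₂ hx2 hp1 hp2
  -- helper: any positive-prob member of w₁ or w₂ agrees with x at y
  have key : ∀ (w : Set X), x ∈ w →
      (∀ y : Y, ∀ a ∈ w, ∀ b ∈ w, 0 < p (a, y) → 0 < p (b, y) → f (a, y) = f (b, y)) →
      ∀ a ∈ w, 0 < p (a, y) → f (a, y) = f (x, y) := by
    intro w hxw Hw a ha hpa
    rcases lt_or_eq_of_le (hnn (x, y)) with hpx | hpx
    · exact Hw y a ha x hxw hpa hpx
    · by_contra hne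
      rcases hcond1 y a x hne with ⟨h0, -⟩ | ⟨-, hpos⟩
      · exact absurd h0 (ne_of_gt hpa)
      · exact absurd hpx.symm (ne_of_gt hpos)
  rcases hx1 with h1 | h1 <;> rcases hx2 with h2 | h2
  · exact H₁ y x₁ h1 x₂ h2 hp1 hp2
  · rw [key w₁ hx₁ H₁ x₁ h1 hp1, key w₂ hx₂ H₂ x₂ h2 hp2]
  · rw [key w₂ hx₂ H₂ x₁ h1 hp1, key w₁ hx₁ H₁ x₂ h2 hp2]
  · exact H₂ y x₁ h1 x₂ h2 hp1 hp2
end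

section
/- Suppose X₁ and X₂ are independent and auxiliary variables U₁, U₂ satisfy the chain U₁ − X₁ − X₂ − U₂ with a reconstruction z(u₁, u₂) satisfying ℙ[‖f(X₁, X₂) − z(U₁, U₂)‖ > ε] = 0. Define w_i(u_i) = {x_i : p(x_i, u_i) > 0}. Then for every (u₁, u₂) in the support, the set {f(x₁, x₂) : x₁ ∈ w₁(u₁), x₂ ∈ w₂(u₂)} is contained in the closed ball of radius ε around z(u₁, u₂). -/
/-- Suppose `X₁ ⟂ X₂` with full support, `U₁, U₂` satisfy the chain
`U₁ − X₁ − X₂ − U₂` (joint pmf `p(x₁)p(x₂)q₁(u₁|x₁)q₂(u₂|x₂)`), and the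
reconstruction `z(u₁,u₂)` satisfies `ℙ[dist (f(X₁,X₂)) (z(U₁,U₂)) > ε] = 0`.
With `wᵢ(uᵢ) = {xᵢ : p(xᵢ,uᵢ) > 0}`, for every `(u₁,u₂)` in the support, the set
`{f(x₁,x₂) : x₁ ∈ w₁(u₁), x₂ ∈ w₂(u₂)}` lies in the closed ball of radius `ε`
around `z(u₁,u₂)`. -/
theorem stmt_18 {X₁ X₂ U₁ U₂ Z : Type*}
    [Fintype X₁] [Fintype X₂] [Fintype U₁] [Fintype U₂] [MetricSpace Z]
    (f : X₁ → X₂ → Z) (z : U₁ → U₂ → Z) (ε : ℝ) (hε : 0 ≤ ε)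
    (p₁ : X₁ → ℝ) (p₂ : X₂ → ℝ) (q₁ : X₁ → U₁ → ℝ) (q₂ : X₂ → U₂ → ℝ)
    (hp₁pos : ∀ x₁, 0 < p₁ x₁) (hp₁sum : ∑ x₁, p₁ x₁ = 1)
    (hp₂pos : ∀ x₂, 0 < p₂ x₂) (hp₂sum : ∑ x₂, p₂ x₂ = 1)
    (hq₁nn : ∀ x₁ u₁, 0 ≤ q₁ x₁ u₁) (hq₁sum : ∀ x₁, ∑ u₁, q₁ x₁ u₁ = 1)
    (hq₂nn : ∀ x₂ u₂, 0 ≤ q₂ x₂ u₂) (hq₂sum : ∀ x₂, ∑ u₂, q₂ x₂ u₂ = 1)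
    -- the distortion event has probability zero
    (hzero : ∑ x₁, ∑ x₂, ∑ u₁, ∑ u₂,
        (if ε < dist (f x₁ x₂) (z u₁ u₂)
         then p₁ x₁ * p₂ x₂ * q₁ x₁ u₁ * q₂ x₂ u₂ else 0) = 0) :
    ∀ u₁ u₂, 0 < (∑ x₁, ∑ x₂, p₁ x₁ * p₂ x₂ * q₁ x₁ u₁ * q₂ x₂ u₂) →
      ∀ x₁ x₂, 0 < p₁ x₁ * q₁ x₁ u₁ → 0 < p₂ x₂ * q₂ x₂ u₂ →
        dist (f x₁ x₂) (z u₁ u₂) ≤ ε := by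
  intro u₁ u₂ _ x₁ x₂ h1 h2
  by_contra h
  push_neg at h
  have hnn : ∀ a ∈ Finset.univ, 0 ≤ ∑ b : X₂, ∑ c : U₁, ∑ d : U₂,
      (if ε < dist (f a b) (z c d) then p₁ a * p₂ b * q₁ a c * q₂ b d else 0) := by
    intro a _
    refine Finset.sum_nonneg fun b _ => Finset.sum_nonneg fun c _ => Finset.sum_nonneg fun d _ => ?_
    have := hp₁pos a; have := hp₂pos b; have := hq₁nn a c; have := hq₂nn b d
    split_ifs <;> positivity
  have h1' := (Finset.sum_eq_zero_iff_of_nonneg hnn).mp hzero x₁ (Finset.mem_univ _)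
  have hnn2 : ∀ b ∈ Finset.univ, 0 ≤ ∑ c : U₁, ∑ d : U₂,
      (if ε < dist (f x₁ b) (z c d) then p₁ x₁ * p₂ b * q₁ x₁ c * q₂ b d else 0) := by
    intro b _
    refine Finset.sum_nonneg fun c _ => Finset.sum_nonneg fun d _ => ?_
    have := hp₁pos x₁; have := hp₂pos b; have := hq₁nn x₁ c; have := hq₂nn b d
    split_ifs <;> positivity
  have h2' := (Finset.sum_eq_zero_iff_of_nonneg hnn2).mp h1' x₂ (Finset.mem_univ _)
  have hnn3 : ∀ c ∈ Finset.univ, 0 ≤ ∑ d : U₂,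
      (if ε < dist (f x₁ x₂) (z c d) then p₁ x₁ * p₂ x₂ * q₁ x₁ c * q₂ x₂ d else 0) := by
    intro c _
    refine Finset.sum_nonneg fun d _ => ?_
    have := hp₁pos x₁; have := hp₂pos x₂; have := hq₁nn x₁ c; have := hq₂nn x₂ d
    split_ifs <;> positivity
  have h3' := (Finset.sum_eq_zero_iff_of_nonneg hnn3).mp h2' u₁ (Finset.mem_univ _)
  have h4' := (Finset.sum_eq_zero_iff_of_nonneg (fun d _ => by
    have := hp₁pos x₁; have := hp₂pos x₂; have := hq₁nn x₁ u₁; have := hq₂nn x₂ d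
    split_ifs <;> positivity)).mp h3' u₂
    (Finset.mem_univ _)
  rw [if_pos h] at h4'
  have hq1 : 0 < q₁ x₁ u₁ := by nlinarith [hp₁pos x₁, hq₁nn x₁ u₁]
  have hq2 : 0 < q₂ x₂ u₂ := by nlinarith [hp₂pos x₂, hq₂nn x₂ u₂]
  have : 0 < p₁ x₁ * p₂ x₂ * q₁ x₁ u₁ * q₂ x₂ u₂ := by
    have := hp₁pos x₁; have := hp₂pos x₂; positivity
  linarith
end
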